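/- Let G be a κ-deletion-minimal graph, and let v be adjacent to a vertex v₀ of degree 2 with N_G(v₀) = {w, v}. If κ ≥ deg_G(v) + 1 and wv is an edge of G, then v is adjacent to at least κ − deg_G(w) + 2 vertices of degree at least κ − deg_G(v) + 2, and deg_G(v) ≥ κ − deg_G(w) + 3. -/

import Mathlib

open SimpleGraph

universe u₁ u₂

/-- The degree of a vertex `x` in a graph `G` (number of neighbors). -/
noncomputable def vdeg {V : Type u₁} (G : SimpleGraph V) (x : V) : ℕ :=
  (G.neighborSet x).ncard

/-- The maximum degree `Δ(G)` of a graph `G`. -/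
noncomputable def maxDeg {V : Type u₁} (G : SimpleGraph V) : ℕ :=
  sSup (Set.range (vdeg G))

/-- A proper edge coloring: distinct edges of `G` sharing an endpoint get distinct colors. -/
def IsProperEdgeColoring {V : Type u₁} (G : SimpleGraph V) (φ : Sym2 V → ℕ) : Prop :=
  ∀ e₁ ∈ G.edgeSet, ∀ e₂ ∈ G.edgeSet, e₁ ≠ e₂ → (∃ x : V, x ∈ e₁ ∧ x ∈ e₂) → φ e₁ ≠ φ e₂

/-- An acyclic edge coloring: a proper edge coloring in which every cycle receives
at least three colors. -/
def IsAcyclicEdgeColoring {V : Type u₁} (G : SimpleGraph V) (φ : Sym2 V → ℕ) : Prop :=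
  IsProperEdgeColoring G φ ∧
    ∀ (x : V) (c : G.Walk x x), c.IsCycle → 3 ≤ (c.edges.map φ).toFinset.card

/-- The acyclic chromatic index `χ'ₐ(G)`: the least number of colors in an acyclic
edge coloring of `G`. -/
noncomputable def acyclicChromaticIndex {V : Type u₁} (G : SimpleGraph V) : ℕ :=
  sInf {n : ℕ | ∃ φ : Sym2 V → ℕ, IsAcyclicEdgeColoring G φ ∧ ∀ e ∈ G.edgeSet, φ e < n}

/-- A graph `G` with maximum degree at most `κ` is `κ`-deletion-minimal if
`χ'ₐ(G) > κ` while `χ'ₐ(H) ≤ κ` for every proper subgraph `H` of `G`. -/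
def DeletionMinimal {V : Type u₁} (G : SimpleGraph V) (κ : ℕ) : Prop :=
  maxDeg G ≤ κ ∧ κ < acyclicChromaticIndex G ∧
    ∀ H : SimpleGraph V, H < G → acyclicChromaticIndex H ≤ κ

/-- `H` is a minor of `G`: there are nonempty, pairwise disjoint, connected branch sets
in `G`, one for each vertex of `H`, with an edge of `G` between the branch sets of any
two adjacent vertices of `H`. -/
def IsMinor {W : Type u₂} {V : Type u₁} (H : SimpleGraph W) (G : SimpleGraph V) : Prop :=
  ∃ B : W → Set V,
    (∀ w, (B w).Nonempty) ∧
    (∀ w, (G.induce (B w)).Connected) ∧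
    (∀ w₁ w₂, w₁ ≠ w₂ → Disjoint (B w₁) (B w₂)) ∧
    ∀ w₁ w₂, H.Adj w₁ w₂ → ∃ v₁ ∈ B w₁, ∃ v₂ ∈ B w₂, G.Adj v₁ v₂

/-- A proper minor of `G`: a minor which is not isomorphic to `G`. -/
def IsProperMinor {W : Type u₂} {V : Type u₁} (H : SimpleGraph W) (G : SimpleGraph V) : Prop :=
  IsMinor H G ∧ ¬ Nonempty (H ≃g G)

/-- A graph `G` with maximum degree at most `κ` is `κ`-minimal if `χ'ₐ(G) > κ` while
`χ'ₐ(H) ≤ κ` for every proper minor `H` of `G` with `Δ(H) ≤ Δ(G)`. -/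
def KMinimal {V : Type u₁} (G : SimpleGraph V) (κ : ℕ) : Prop :=
  maxDeg G ≤ κ ∧ κ < acyclicChromaticIndex G ∧
    ∀ (W : Type u₁) (H : SimpleGraph W),
      IsProperMinor H G → maxDeg H ≤ maxDeg G → acyclicChromaticIndex H ≤ κ

/-- Planarity, characterized combinatorially (Wagner's theorem): a graph is planar iff
it has neither a `K₅` minor nor a `K₃,₃` minor. -/
def IsPlanar {V : Type u₁} (G : SimpleGraph V) : Prop :=
  ¬ IsMinor (completeGraph (Fin 5)) G ∧
    ¬ IsMinor (completeBipartiteGraph (Fin 3) (Fin 3)) G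

/-- `G` is 2-connected: it is connected, has at least three vertices, and removing
any single vertex leaves it connected. -/
def TwoConnected {V : Type u₁} (G : SimpleGraph V) : Prop :=
  G.Connected ∧ 3 ≤ Nat.card V ∧ ∀ x : V, (G.induce {y : V | y ≠ x}).Connected

/-- A path of `H` whose edges are all colored `α` or `β` and alternate. -/
def IsAltPath {V : Type u₁} (H : SimpleGraph V) (φ : Sym2 V → ℕ) (α β : ℕ)
    {x y : V} (p : H.Walk x y) : Prop :=
  p.IsPath ∧ (∀ e ∈ p.edges, φ e = α ∨ φ e = β) ∧
    p.edges.Chain' fun e₁ e₂ => φ e₁ ≠ φ e₂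

/-- A maximal `(α, β)`-dichromatic path: an alternating path that is not properly
contained in any other alternating path. -/
def IsMaxAltPath {V : Type u₁} (H : SimpleGraph V) (φ : Sym2 V → ℕ) (α β : ℕ)
    {x y : V} (p : H.Walk x y) : Prop :=
  IsAltPath H φ α β p ∧
    ∀ {x' y' : V} (q : H.Walk x' y'), IsAltPath H φ α β q →
      (∀ z ∈ p.support, z ∈ q.support) → (∀ e ∈ p.edges, e ∈ q.edges) →
      ∀ e ∈ q.edges, e ∈ p.edges

/-!
Delete the two edges at `v₀` and take an acyclic `κ`-edge-coloring `φ` of the rest; write `C(x)`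
for the set of colors at `x`. For colors `a ∉ C(w)` and `b ∉ C(v)` with `a ≠ b`, coloring `v₀w`
by `a` and `v₀v` by `b` is proper, so by minimality it closes an `(a, b)`-colored cycle, which must
run `v₀ v t s …` with `φ(vt) = a` and `φ(ts) = b`. Choosing `b ∉ C(v) ∪ {a}` (possible because
`deg v < κ`) shows that every color missing at `w` appears at `v`. For a neighbor `t` of `v` with
`φ(vt) ∉ C(w)`, taking `a = φ(vt)` and letting `b` range over the colors missing at `v` shows that
`t` sees at least `κ - deg v + 2` colors. Counting these neighbors `t`, together with `w`, gives
both bounds.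
-/

def colorsAt {V : Type*} (H : SimpleGraph V) (φ : Sym2 V → ℕ) (x : V) : Set ℕ :=
  (fun y => φ s(x, y)) '' H.neighborSet x

theorem colorsAt_subset_Iio {V : Type*} {H : SimpleGraph V} {φ : Sym2 V → ℕ} {κ : ℕ}
    (hφκ : ∀ e ∈ H.edgeSet, φ e < κ) (x : V) : colorsAt H φ x ⊆ Set.Iio κ := by
  rintro _ ⟨y, hy, rfl⟩
  exact hφκ _ hy

theorem finite_colorsAt {V : Type*} [Finite V] (H : SimpleGraph V) (φ : Sym2 V → ℕ) (x : V) :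
    (colorsAt H φ x).Finite :=
  (Set.toFinite _).image _

section Colorings

variable {V : Type*} {G : SimpleGraph V} {φ : Sym2 V → ℕ}

theorem isProperEdgeColoring_iff_injOn :
    IsProperEdgeColoring G φ ↔ ∀ x, Set.InjOn (fun y => φ s(x, y)) (G.neighborSet x) := by
  constructor
  · intro hφ x y₁ hy₁ y₂ hy₂ heq
    by_contra hne
    exact hφ _ hy₁ _ hy₂ (fun h => hne (Sym2.congr_right.mp h)) ⟨x, by simp, by simp⟩ heq
  · rintro hφ e₁ he₁ e₂ he₂ hne ⟨x, hx₁, hx₂⟩ heq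
    obtain ⟨y₁, rfl⟩ := Sym2.mem_iff_exists.mp hx₁
    obtain ⟨y₂, rfl⟩ := Sym2.mem_iff_exists.mp hx₂
    exact hne (congrArg _ (hφ x he₁ he₂ heq))

theorem IsProperEdgeColoring.ne_of_adj (hφ : IsProperEdgeColoring G φ) {x y z : V}
    (hy : G.Adj x y) (hz : G.Adj x z) (hyz : y ≠ z) : φ s(x, y) ≠ φ s(x, z) :=
  fun h => hyz (isProperEdgeColoring_iff_injOn.mp hφ x hy hz h)

theorem IsProperEdgeColoring.ncard_colorsAt (hφ : IsProperEdgeColoring G φ) (x : V) :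
    (colorsAt G φ x).ncard = (G.neighborSet x).ncard :=
  (isProperEdgeColoring_iff_injOn.mp hφ x).ncard_image

theorem isAcyclicEdgeColoring_of_injective (hφ : Function.Injective φ) :
    IsAcyclicEdgeColoring G φ := by
  refine ⟨fun e₁ _ e₂ _ hne _ h => hne (hφ h), fun x c hc => ?_⟩
  rw [List.toFinset_card_of_nodup (hc.edges_nodup.map hφ), List.length_map, Walk.length_edges]
  exact hc.three_le_length

theorem exists_isAcyclicEdgeColoring_of_acyclicChromaticIndex_le [Finite V] {κ : ℕ}
    (h : acyclicChromaticIndex G ≤ κ) :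
    ∃ φ : Sym2 V → ℕ, IsAcyclicEdgeColoring G φ ∧ ∀ e ∈ G.edgeSet, φ e < κ := by
  have hne :
      {n | ∃ φ : Sym2 V → ℕ, IsAcyclicEdgeColoring G φ ∧ ∀ e ∈ G.edgeSet, φ e < n}.Nonempty := by
    obtain ⟨n, ⟨f⟩⟩ := Finite.exists_equiv_fin (Sym2 V)
    exact ⟨n, fun e => f e, isAcyclicEdgeColoring_of_injective
      (Fin.val_injective.comp f.injective), fun e _ => (f e).isLt⟩
  obtain ⟨φ, hφ, hlt⟩ := Nat.sInf_mem hne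
  exact ⟨φ, hφ, fun e he => (hlt e he).trans_le h⟩

theorem IsProperEdgeColoring.exists_isCycle_of_lt_acyclicChromaticIndex {κ : ℕ}
    (hφ : IsProperEdgeColoring G φ) (hφκ : ∀ e ∈ G.edgeSet, φ e < κ)
    (hκ : κ < acyclicChromaticIndex G) :
    ∃ (x : V) (c : G.Walk x x), c.IsCycle ∧ (c.edges.map φ).toFinset.card < 3 := by
  by_contra! hac
  exact (Nat.sInf_le ⟨φ, ⟨hφ, hac⟩, hφκ⟩ : acyclicChromaticIndex G ≤ κ).not_gt hκ

end Colorings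

namespace SimpleGraph.Walk.IsCycle

variable {V : Type*} {G : SimpleGraph V} {u : V} {c : G.Walk u u}

theorem exists_toSubgraph_adj_ne (hc : c.IsCycle) {x : V} (hx : x ∈ c.support) (y : V) :
    ∃ z, c.toSubgraph.Adj x z ∧ z ≠ y :=
  Set.exists_ne_of_one_lt_ncard (s := c.toSubgraph.neighborSet x)
    (by rw [hc.ncard_neighborSet_toSubgraph_eq_two hx]; norm_num) y

theorem toSubgraph_adj_of_neighborSet_eq_pair (hc : c.IsCycle) {x y z : V} (hx : x ∈ c.support)
    (hN : G.neighborSet x = {y, z}) : c.toSubgraph.Adj x y ∧ c.toSubgraph.Adj x z := by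
  have hsub : c.toSubgraph.neighborSet x ⊆ {y, z} :=
    hN ▸ fun t ht => c.toSubgraph.adj_sub ht
  have hcard : ({y, z} : Set V).ncard ≤ (c.toSubgraph.neighborSet x).ncard := by
    rw [hc.ncard_neighborSet_toSubgraph_eq_two hx]
    exact (Set.ncard_insert_le y {z}).trans (by simp)
  have heq := Set.eq_of_subset_of_ncard_le hsub hcard
  have hy : y ∈ c.toSubgraph.neighborSet x := heq ▸ Set.mem_insert y {z}
  have hz : z ∈ c.toSubgraph.neighborSet x := heq ▸ Set.mem_insert_of_mem y rfl
  exact ⟨hy, hz⟩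

end SimpleGraph.Walk.IsCycle

theorem IsProperEdgeColoring.eq_or_eq_of_mem_edges {V : Type*} {G : SimpleGraph V}
    {φ : Sym2 V → ℕ} (hφ : IsProperEdgeColoring G φ) {u v : V} {p : G.Walk u v}
    (h3 : (p.edges.map φ).toFinset.card < 3) {x y z : V} (hy : s(x, y) ∈ p.edges)
    (hz : s(x, z) ∈ p.edges) (hyz : y ≠ z) {e : Sym2 V} (he : e ∈ p.edges) :
    φ e = φ s(x, y) ∨ φ e = φ s(x, z) := by
  have hsub : {φ s(x, y), φ s(x, z)} ⊆ (p.edges.map φ).toFinset := by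
    intro n hn
    rcases Finset.mem_insert.mp hn with rfl | hn
    · exact List.mem_toFinset.mpr (List.mem_map_of_mem hy)
    · rw [Finset.mem_singleton.mp hn]
      exact List.mem_toFinset.mpr (List.mem_map_of_mem hz)
  have hpair : ({φ s(x, y), φ s(x, z)} : Finset ℕ).card = 2 :=
    Finset.card_pair (hφ.ne_of_adj (p.adj_of_mem_edges hy) (p.adj_of_mem_edges hz) hyz)
  have heq := Finset.eq_of_subset_of_card_le hsub (by omega)
  have hmem : φ e ∈ (p.edges.map φ).toFinset := List.mem_toFinset.mpr (List.mem_map_of_mem he)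
  rw [← heq] at hmem
  simpa using hmem

section DeleteIncidenceSet

variable {V : Type*} {G : SimpleGraph V} {v₀ : V}

theorem adj_of_neighborSet_eq_pair {x y z : V} (hN : G.neighborSet x = {y, z}) :
    G.Adj x y ∧ G.Adj x z :=
  ⟨show y ∈ G.neighborSet x from hN ▸ Set.mem_insert y {z},
    show z ∈ G.neighborSet x from hN ▸ Set.mem_insert_of_mem y rfl⟩

theorem neighborSet_deleteIncidenceSet_of_ne {x : V} (hx : x ≠ v₀) :
    (G.deleteIncidenceSet v₀).neighborSet x = G.neighborSet x \ {v₀} := by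
  ext y
  simp [deleteIncidenceSet_adj, hx]

theorem ncard_neighborSet_deleteIncidenceSet_add_one [Finite V] {x : V} (hx : G.Adj x v₀) :
    ((G.deleteIncidenceSet v₀).neighborSet x).ncard + 1 = vdeg G x := by
  rw [neighborSet_deleteIncidenceSet_of_ne hx.ne, vdeg]
  exact Set.ncard_sdiff_singleton_add_one (s := G.neighborSet x) hx

theorem deleteIncidenceSet_lt {y : V} (h : G.Adj v₀ y) : G.deleteIncidenceSet v₀ < G := by
  refine lt_of_le_of_ne (G.deleteIncidenceSet_le v₀) fun heq => ?_
  have h' : (G.deleteIncidenceSet v₀).Adj v₀ y := by rw [heq]; exact h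
  exact (deleteIncidenceSet_adj.mp h').2.1 rfl

theorem mem_support_of_isAcyclicEdgeColoring_deleteIncidenceSet {φ ψ : Sym2 V → ℕ}
    (hφ : IsAcyclicEdgeColoring (G.deleteIncidenceSet v₀) φ)
    (hψ : ∀ e ∈ (G.deleteIncidenceSet v₀).edgeSet, ψ e = φ e) {u : V} {c : G.Walk u u}
    (hc : c.IsCycle) (h3 : (c.edges.map ψ).toFinset.card < 3) : v₀ ∈ c.support := by
  by_contra hv₀
  have hH : ∀ e ∈ c.edges, e ∈ (G.deleteIncidenceSet v₀).edgeSet := fun e he => by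
    rw [edgeSet_deleteIncidenceSet]
    exact ⟨c.edges_subset_edgeSet he, fun hi => hv₀ (c.mem_support_of_mem_edges he hi.2)⟩
  have h3' := hφ.2 u (c.transfer _ hH) (hc.transfer hH)
  rw [Walk.edges_transfer, ← List.map_congr_left fun e he => hψ e (hH e he)] at h3'
  omega

end DeleteIncidenceSet

section DegreeTwoVertex

variable {V : Type*} {G : SimpleGraph V} {v₀ v w : V} {φ : Sym2 V → ℕ} {a b κ : ℕ}

theorem isProperEdgeColoring_of_deleteIncidenceSet {ψ : Sym2 V → ℕ}
    (hN : G.neighborSet v₀ = {w, v}) (hφ : IsProperEdgeColoring (G.deleteIncidenceSet v₀) φ)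
    (hψ : ∀ e ∈ (G.deleteIncidenceSet v₀).edgeSet, ψ e = φ e)
    (hψw : ψ s(v₀, w) = a) (hψv : ψ s(v₀, v) = b) (hab : a ≠ b)
    (haw : a ∉ colorsAt (G.deleteIncidenceSet v₀) φ w)
    (hbv : b ∉ colorsAt (G.deleteIncidenceSet v₀) φ v) : IsProperEdgeColoring G ψ := by
  rw [isProperEdgeColoring_iff_injOn]
  intro x
  by_cases hx : x = v₀
  · subst hx
    rw [hN]
    rintro y₁ (rfl | rfl) y₂ (rfl | rfl) h <;> simp_all
  have hφx : Set.InjOn (fun y => ψ s(x, y)) ((G.deleteIncidenceSet v₀).neighborSet x) :=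
    (isProperEdgeColoring_iff_injOn.mp hφ x).congr fun y hy => (hψ _ hy).symm
  by_cases hxv₀ : v₀ ∈ G.neighborSet x
  · have hins : G.neighborSet x = insert v₀ ((G.deleteIncidenceSet v₀).neighborSet x) := by
      rw [neighborSet_deleteIncidenceSet_of_ne hx, Set.insert_sdiff_singleton,
        Set.insert_eq_of_mem hxv₀]
    have hv₀H : v₀ ∉ (G.deleteIncidenceSet v₀).neighborSet x :=
      fun h => (deleteIncidenceSet_adj.mp h).2.2 rfl
    rw [hins, Set.injOn_insert hv₀H]
    refine ⟨hφx, ?_⟩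
    have himage : (fun y => ψ s(x, y)) '' (G.deleteIncidenceSet v₀).neighborSet x =
        colorsAt (G.deleteIncidenceSet v₀) φ x :=
      Set.image_congr fun y hy => hψ _ hy
    have hx' : x ∈ G.neighborSet v₀ := hxv₀.symm
    rw [himage, Sym2.eq_swap]
    rw [hN] at hx'
    rcases hx' with rfl | rfl
    · rwa [hψw]
    · rwa [hψv]
  · have hG : G.neighborSet x = (G.deleteIncidenceSet v₀).neighborSet x := by
      rw [neighborSet_deleteIncidenceSet_of_ne hx, Set.sdiff_singleton_eq_self hxv₀]
    rwa [hG]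

theorem exists_isProperEdgeColoring_extend (hN : G.neighborSet v₀ = {w, v}) (hwv : w ≠ v)
    (hφ : IsProperEdgeColoring (G.deleteIncidenceSet v₀) φ)
    (hφκ : ∀ e ∈ (G.deleteIncidenceSet v₀).edgeSet, φ e < κ) (ha : a < κ) (hb : b < κ)
    (hab : a ≠ b) (haw : a ∉ colorsAt (G.deleteIncidenceSet v₀) φ w)
    (hbv : b ∉ colorsAt (G.deleteIncidenceSet v₀) φ v) :
    ∃ ψ : Sym2 V → ℕ, IsProperEdgeColoring G ψ ∧ (∀ e ∈ G.edgeSet, ψ e < κ) ∧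
      (∀ e ∈ (G.deleteIncidenceSet v₀).edgeSet, ψ e = φ e) ∧
      ψ s(v₀, w) = a ∧ ψ s(v₀, v) = b := by
  classical
  set ψ := Function.update (Function.update φ s(v₀, v) b) s(v₀, w) a
  have hψw : ψ s(v₀, w) = a := by simp [ψ]
  have hvw : s(v₀, v) ≠ s(v₀, w) := fun h => hwv (Sym2.congr_right.mp h).symm
  have hψv : ψ s(v₀, v) = b := by simp [ψ, hvw]
  have hψ : ∀ e ∈ (G.deleteIncidenceSet v₀).edgeSet, ψ e = φ e := by
    intro e he
    rw [edgeSet_deleteIncidenceSet] at he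
    have hne : ∀ y, e ≠ s(v₀, y) := fun y h => he.2 ⟨he.1, h ▸ Sym2.mem_mk_left _ _⟩
    simp [ψ, hne]
  refine ⟨ψ, isProperEdgeColoring_of_deleteIncidenceSet hN hφ hψ hψw hψv hab haw hbv,
    fun e he => ?_, hψ, hψw, hψv⟩
  by_cases heH : e ∈ (G.deleteIncidenceSet v₀).edgeSet
  · exact hψ e heH ▸ hφκ e heH
  rw [edgeSet_deleteIncidenceSet] at heH
  have hv₀e : v₀ ∈ e := by_contra fun h => heH ⟨he, fun hi => h hi.2⟩
  obtain ⟨y, rfl⟩ := Sym2.mem_iff_exists.mp hv₀e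
  have hy : y ∈ G.neighborSet v₀ := he
  rw [hN] at hy
  rcases hy with rfl | rfl
  · rwa [hψw]
  · rwa [hψv]


theorem exists_adj_eq_and_mem_colorsAt (hκ : κ < acyclicChromaticIndex G)
    (hN : G.neighborSet v₀ = {w, v}) (hwv : w ≠ v)
    (hφ : IsAcyclicEdgeColoring (G.deleteIncidenceSet v₀) φ)
    (hφκ : ∀ e ∈ (G.deleteIncidenceSet v₀).edgeSet, φ e < κ) (ha : a < κ) (hb : b < κ)
    (hab : a ≠ b) (haw : a ∉ colorsAt (G.deleteIncidenceSet v₀) φ w)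
    (hbv : b ∉ colorsAt (G.deleteIncidenceSet v₀) φ v) :
    ∃ t, (G.deleteIncidenceSet v₀).Adj v t ∧ φ s(v, t) = a ∧
      b ∈ colorsAt (G.deleteIncidenceSet v₀) φ t := by
  obtain ⟨ψ, hψ, hψκ, hψφ, hψw, hψv⟩ :=
    exists_isProperEdgeColoring_extend hN hwv hφ.1 hφκ ha hb hab haw hbv
  obtain ⟨u, c, hc, h3⟩ := hψ.exists_isCycle_of_lt_acyclicChromaticIndex hψκ hκ
  have hv₀ := mem_support_of_isAcyclicEdgeColoring_deleteIncidenceSet hφ hψφ hc h3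
  obtain ⟨hv₀w, hv₀v⟩ := hc.toSubgraph_adj_of_neighborSet_eq_pair hv₀ hN
  have hcol : ∀ e ∈ c.edges, ψ e = a ∨ ψ e = b := fun e he => hψw ▸ hψv ▸
    hψ.eq_or_eq_of_mem_edges h3 (Walk.adj_toSubgraph_iff_mem_edges.mp hv₀w)
      (Walk.adj_toSubgraph_iff_mem_edges.mp hv₀v) hwv he
  obtain ⟨t, hvt, htv₀⟩ :=
    hc.exists_toSubgraph_adj_ne (Walk.mem_support_of_adj_toSubgraph hv₀v.symm) v₀
  have hvtH : (G.deleteIncidenceSet v₀).Adj v t :=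
    deleteIncidenceSet_adj.mpr ⟨c.toSubgraph.adj_sub hvt, (c.toSubgraph.adj_sub hv₀v).ne', htv₀⟩
  have hφvt : φ s(v, t) = a := by
    have hne : ψ s(v, t) ≠ ψ s(v, v₀) :=
      hψ.ne_of_adj (c.toSubgraph.adj_sub hvt) (c.toSubgraph.adj_sub hv₀v).symm htv₀
    rw [Sym2.eq_swap (a := v) (b := v₀), hψv] at hne
    rw [← hψφ _ hvtH]
    exact (hcol _ (Walk.adj_toSubgraph_iff_mem_edges.mp hvt)).resolve_right hne
  have htw : t ≠ w := by
    rintro rfl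
    exact haw ⟨v, hvtH.symm, show φ s(t, v) = a by rw [Sym2.eq_swap, hφvt]⟩
  obtain ⟨s, hts, hsv⟩ :=
    hc.exists_toSubgraph_adj_ne (Walk.mem_support_of_adj_toSubgraph hvt.symm) v
  have hsv₀ : s ≠ v₀ := by
    intro hs
    have ht : t ∈ G.neighborSet v₀ := hs ▸ (c.toSubgraph.adj_sub hts).symm
    rw [hN] at ht
    exact ht.elim htw fun h => hvtH.ne h.symm
  have htsH : (G.deleteIncidenceSet v₀).Adj t s :=
    deleteIncidenceSet_adj.mpr ⟨c.toSubgraph.adj_sub hts, htv₀, hsv₀⟩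
  refine ⟨t, hvtH, hφvt, s, htsH, ?_⟩
  have hne : ψ s(t, s) ≠ ψ s(t, v) :=
    hψ.ne_of_adj (c.toSubgraph.adj_sub hts) (c.toSubgraph.adj_sub hvt).symm hsv
  rw [hψφ s(t, v) hvtH.symm, Sym2.eq_swap (a := t) (b := v), hφvt] at hne
  show φ s(t, s) = b
  rw [← hψφ _ htsH]
  exact (hcol _ (Walk.adj_toSubgraph_iff_mem_edges.mp hts)).resolve_left hne

end DegreeTwoVertex

section Counting

variable {V : Type*} [Finite V] {G : SimpleGraph V} {v₀ v w : V} {φ : Sym2 V → ℕ} {κ : ℕ}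

theorem Iio_sdiff_colorsAt_subset_colorsAt (hκ : κ < acyclicChromaticIndex G)
    (hN : G.neighborSet v₀ = {w, v}) (hwv : w ≠ v)
    (hφ : IsAcyclicEdgeColoring (G.deleteIncidenceSet v₀) φ)
    (hφκ : ∀ e ∈ (G.deleteIncidenceSet v₀).edgeSet, φ e < κ) (hdeg : vdeg G v + 1 ≤ κ) :
    Set.Iio κ \ colorsAt (G.deleteIncidenceSet v₀) φ w ⊆
      colorsAt (G.deleteIncidenceSet v₀) φ v := by
  rintro a ⟨ha, haw⟩
  by_contra hav
  have hcard : (insert a (colorsAt (G.deleteIncidenceSet v₀) φ v)).ncard < (Set.Iio κ).ncard := by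
    rw [Set.ncard_insert_of_notMem hav (finite_colorsAt _ _ _), hφ.1.ncard_colorsAt,
      Set.ncard_Iio_nat]
    have := ncard_neighborSet_deleteIncidenceSet_add_one (adj_of_neighborSet_eq_pair hN).2.symm
    omega
  obtain ⟨b, hb, hbv⟩ :=
    Set.exists_mem_notMem_of_ncard_lt_ncard hcard ((finite_colorsAt _ _ _).insert a)
  obtain ⟨t, hvt, hφvt, -⟩ := exists_adj_eq_and_mem_colorsAt hκ hN hwv hφ hφκ ha hb
    (fun h => hbv (h ▸ Set.mem_insert a _)) haw (fun h => hbv (Set.mem_insert_of_mem a h))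
  exact hav ⟨t, hvt, hφvt⟩

theorem le_vdeg_of_notMem_colorsAt (hκ : κ < acyclicChromaticIndex G)
    (hN : G.neighborSet v₀ = {w, v}) (hwv : w ≠ v)
    (hφ : IsAcyclicEdgeColoring (G.deleteIncidenceSet v₀) φ)
    (hφκ : ∀ e ∈ (G.deleteIncidenceSet v₀).edgeSet, φ e < κ) {t : V}
    (hvt : (G.deleteIncidenceSet v₀).Adj v t)
    (htw : φ s(v, t) ∉ colorsAt (G.deleteIncidenceSet v₀) φ w) :
    (κ : ℤ) - vdeg G v + 2 ≤ vdeg G t := by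
  have hsub : insert (φ s(v, t)) (Set.Iio κ \ colorsAt (G.deleteIncidenceSet v₀) φ v) ⊆
      colorsAt (G.deleteIncidenceSet v₀) φ t := by
    rintro b (rfl | ⟨hb, hbv⟩)
    · exact ⟨v, hvt.symm, congrArg φ Sym2.eq_swap⟩
    · have hab : φ s(v, t) ≠ b := fun h => hbv (h ▸ ⟨t, hvt, rfl⟩)
      obtain ⟨t', hvt', hφvt', hbt'⟩ :=
        exists_adj_eq_and_mem_colorsAt hκ hN hwv hφ hφκ (hφκ _ hvt) hb hab htw hbv
      rwa [isProperEdgeColoring_iff_injOn.mp hφ.1 v hvt' hvt hφvt'] at hbt'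
  have hcard := Set.ncard_le_ncard hsub (finite_colorsAt _ _ _)
  rw [Set.ncard_insert_of_notMem (fun h => h.2 ⟨t, hvt, rfl⟩),
    Set.ncard_sdiff (colorsAt_subset_Iio hφκ v) (finite_colorsAt _ _ _), Set.ncard_Iio_nat,
    hφ.1.ncard_colorsAt, hφ.1.ncard_colorsAt] at hcard
  have hdegv := ncard_neighborSet_deleteIncidenceSet_add_one (adj_of_neighborSet_eq_pair hN).2.symm
  have hdegt : ((G.deleteIncidenceSet v₀).neighborSet t).ncard ≤ vdeg G t :=
    Set.ncard_le_ncard fun y hy => G.deleteIncidenceSet_le v₀ hy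
  omega


theorem le_vdeg_of_Iio_sdiff_colorsAt_subset (hN : G.neighborSet v₀ = {w, v}) (hwv : G.Adj w v)
    (hφ : IsProperEdgeColoring (G.deleteIncidenceSet v₀) φ)
    (hφκ : ∀ e ∈ (G.deleteIncidenceSet v₀).edgeSet, φ e < κ)
    (hA : Set.Iio κ \ colorsAt (G.deleteIncidenceSet v₀) φ w ⊆
      colorsAt (G.deleteIncidenceSet v₀) φ v) :
    (κ : ℤ) - vdeg G w + 3 ≤ vdeg G v := by
  obtain ⟨hv₀w, hv₀v⟩ := adj_of_neighborSet_eq_pair hN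
  have hvw : (G.deleteIncidenceSet v₀).Adj v w :=
    deleteIncidenceSet_adj.mpr ⟨hwv.symm, hv₀v.ne', hv₀w.ne'⟩
  have hsub : insert (φ s(v, w)) (Set.Iio κ \ colorsAt (G.deleteIncidenceSet v₀) φ w) ⊆
      colorsAt (G.deleteIncidenceSet v₀) φ v := by
    rintro b (rfl | hb)
    · exact ⟨w, hvw, rfl⟩
    · exact hA hb
  have hcard := Set.ncard_le_ncard hsub (finite_colorsAt _ _ _)
  rw [Set.ncard_insert_of_notMem fun h => h.2 ⟨v, hvw.symm, congrArg φ Sym2.eq_swap⟩,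
    Set.ncard_sdiff (colorsAt_subset_Iio hφκ w) (finite_colorsAt _ _ _), Set.ncard_Iio_nat,
    hφ.ncard_colorsAt, hφ.ncard_colorsAt] at hcard
  have hdegv := ncard_neighborSet_deleteIncidenceSet_add_one hv₀v.symm
  have hdegw := ncard_neighborSet_deleteIncidenceSet_add_one hv₀w.symm
  omega

theorem le_ncard_of_Iio_sdiff_colorsAt_subset (hN : G.neighborSet v₀ = {w, v})
    (hwv : G.Adj w v) (hφ : IsProperEdgeColoring (G.deleteIncidenceSet v₀) φ)
    (hφκ : ∀ e ∈ (G.deleteIncidenceSet v₀).edgeSet, φ e < κ)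
    (hA : Set.Iio κ \ colorsAt (G.deleteIncidenceSet v₀) φ w ⊆
      colorsAt (G.deleteIncidenceSet v₀) φ v)
    (hB : ∀ t, (G.deleteIncidenceSet v₀).Adj v t →
      φ s(v, t) ∉ colorsAt (G.deleteIncidenceSet v₀) φ w → (κ : ℤ) - vdeg G v + 2 ≤ vdeg G t) :
    (κ : ℤ) - vdeg G w + 2 ≤
      ({x | G.Adj v x ∧ (κ : ℤ) - vdeg G v + 2 ≤ vdeg G x}.ncard : ℤ) := by
  set T := {t | (G.deleteIncidenceSet v₀).Adj v t ∧
    φ s(v, t) ∉ colorsAt (G.deleteIncidenceSet v₀) φ w}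
  have hT : Set.Iio κ \ colorsAt (G.deleteIncidenceSet v₀) φ w ⊆ (fun t => φ s(v, t)) '' T := by
    intro a ha
    obtain ⟨t, hvt, rfl⟩ := hA ha
    exact ⟨t, ⟨hvt, ha.2⟩, rfl⟩
  have hwT : w ∉ T := fun h => h.2 ⟨v, h.1.symm, congrArg φ Sym2.eq_swap⟩
  have hvw := le_vdeg_of_Iio_sdiff_colorsAt_subset hN hwv hφ hφκ hA
  have hsub : insert w T ⊆ {x | G.Adj v x ∧ (κ : ℤ) - vdeg G v + 2 ≤ vdeg G x} := by
    rintro t (rfl | ⟨hvt, htw⟩)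
    · exact ⟨hwv.symm, by omega⟩
    · exact ⟨(deleteIncidenceSet_adj.mp hvt).1, hB t hvt htw⟩
  have hcardT := (Set.ncard_le_ncard hT).trans (Set.ncard_image_le (s := T))
  have hcardS := Set.ncard_le_ncard hsub
  rw [Set.ncard_insert_of_notMem hwT] at hcardS
  rw [Set.ncard_sdiff (colorsAt_subset_Iio hφκ w) (finite_colorsAt _ _ _), Set.ncard_Iio_nat,
    hφ.ncard_colorsAt] at hcardT
  have hdegw :=
    ncard_neighborSet_deleteIncidenceSet_add_one (adj_of_neighborSet_eq_pair hN).1.symm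
  omega

end Counting

theorem deletionMinimal_neighbors_of_degree_two_triangle_general {V : Type u₁} [Fintype V]
    (G : SimpleGraph V) (κ : ℕ) (h : DeletionMinimal G κ)
    (v v₀ w : V) (hN : G.neighborSet v₀ = {w, v})
    (hκ : vdeg G v + 1 ≤ κ) (hwv : G.Adj w v) :
    (κ : ℤ) - vdeg G w + 2 ≤
        (({x : V | G.Adj v x ∧ (κ : ℤ) - vdeg G v + 2 ≤ (vdeg G x : ℤ)}).ncard : ℤ) ∧
      (κ : ℤ) - vdeg G w + 3 ≤ (vdeg G v : ℤ) := by
  obtain ⟨-, hGκ, hmin⟩ := h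
  obtain ⟨φ, hφ, hφκ⟩ := exists_isAcyclicEdgeColoring_of_acyclicChromaticIndex_le
    (hmin _ (deleteIncidenceSet_lt (adj_of_neighborSet_eq_pair hN).1))
  have hA := Iio_sdiff_colorsAt_subset_colorsAt hGκ hN hwv.ne hφ hφκ hκ
  exact ⟨le_ncard_of_Iio_sdiff_colorsAt_subset hN hwv hφ.1 hφκ hA
      fun _ => le_vdeg_of_notMem_colorsAt hGκ hN hwv.ne hφ hφκ,
    le_vdeg_of_Iio_sdiff_colorsAt_subset hN hwv hφ.1 hφκ hA⟩

/-- If `G` is `κ`-deletion-minimal, `v` is adjacent to a degree-2 vertex `v₀` with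
`N_G(v₀) = {w, v}`, `κ ≥ deg_G(v) + 1`, and `wv ∈ E(G)`, then `v` is adjacent to at least
`κ - deg_G(w) + 2` vertices of degree at least `κ - deg_G(v) + 2`, and
`deg_G(v) ≥ κ - deg_G(w) + 3`. -/
theorem deletionMinimal_neighbors_of_degree_two_triangle {V : Type u₁} [Fintype V]
    (G : SimpleGraph V) (κ : ℕ) (h : DeletionMinimal G κ)
    (v v₀ w : V) (hadj : G.Adj v v₀) (hdeg : vdeg G v₀ = 2)
    (hN : G.neighborSet v₀ = {w, v})
    (hκ : vdeg G v + 1 ≤ κ) (hwv : G.Adj w v) :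
    (κ : ℤ) - vdeg G w + 2 ≤
        (({x : V | G.Adj v x ∧ (κ : ℤ) - vdeg G v + 2 ≤ (vdeg G x : ℤ)}).ncard : ℤ) ∧
      (κ : ℤ) - vdeg G w + 3 ≤ (vdeg G v : ℤ) :=
  deletionMinimal_neighbors_of_degree_two_triangle_general G κ h v v₀ w hN hκ hwv
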